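/- Let s ≥ 0, b ∈ (0,∞), q ∈ ℝ. A real number u with |u| ≤ b is a global minimizer of u ↦ q·u + ½u² + s·|u|₀ over {u : |u| ≤ b} if and only if one of the following holds: (1) u = -b and q ≥ max(b, b/2 + s/b); (2) u = b and q ≤ -max(b, b/2 + s/b); (3) u = -q and √(2s) ≤ |q| ≤ b; (4) u = 0, b ≤ √(2s), and |q| ≤ b/2 + s/b; (5) u = 0, b ≥ √(2s), and |q| ≤ √(2s). -/
import Mathlib

/-- The "L⁰ norm" of a real number: 0 if `u = 0`, else 1. -/
noncomputable def nrm0 (u : ℝ) : ℝ := if u = 0 then 0 else 1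

set_option maxHeartbeats 2000000 in
/-- Characterization of global minimizers of `u ↦ q·u + u²/2 + s·|u|₀` over `{u : |u| ≤ b}`. -/
theorem constrained_hard_threshold_characterization
    (s b q u : ℝ) (hs : 0 ≤ s) (hb : 0 < b) (hu : |u| ≤ b) :
    (∀ v : ℝ, |v| ≤ b →
        q * u + u ^ 2 / 2 + s * nrm0 u ≤ q * v + v ^ 2 / 2 + s * nrm0 v) ↔
      ((u = -b ∧ max b (b / 2 + s / b) ≤ q) ∨
       (u = b ∧ q ≤ -(max b (b / 2 + s / b))) ∨
       (u = -q ∧ Real.sqrt (2 * s) ≤ |q| ∧ |q| ≤ b) ∨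
       (u = 0 ∧ b ≤ Real.sqrt (2 * s) ∧ |q| ≤ b / 2 + s / b) ∨
       (u = 0 ∧ Real.sqrt (2 * s) ≤ b ∧ |q| ≤ Real.sqrt (2 * s))) := by
  have h2s : (0:ℝ) ≤ 2 * s := by linarith
  have hsb : s / b * b = s := div_mul_cancel₀ s hb.ne'
  have hn0 : nrm0 0 = 0 := by simp [nrm0]
  have hn1 : ∀ w : ℝ, w ≠ 0 → nrm0 w = 1 := fun w hw => by simp [nrm0, hw]
  obtain ⟨hul, hur⟩ := abs_le.mp hu
  constructor
  · intro H
    have hb0 : |(0:ℝ)| ≤ b := by simpa using hb.le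
    have hbb : |b| ≤ b := by rw [abs_of_pos hb]
    have hnb : |(-b)| ≤ b := by rw [abs_neg, abs_of_pos hb]
    by_cases hu0 : u = 0
    · -- u = 0 : f(0) = 0 ≤ f(v) for all v
      subst hu0
      have H0 : ∀ v : ℝ, v ≠ 0 → |v| ≤ b → 0 ≤ q * v + v ^ 2 / 2 + s := by
        intro v hv0 hvb
        have h := H v hvb
        rw [hn0, hn1 v hv0] at h
        linarith
      by_cases hcmp : 2 * s ≤ b ^ 2
      · -- case (5)
        right; right; right; right
        have hsle : Real.sqrt (2*s) ≤ b := by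
          have := Real.sqrt_le_sqrt hcmp
          rwa [Real.sqrt_sq hb.le] at this
        refine ⟨rfl, hsle, ?_⟩
        have hq2 : q ^ 2 ≤ 2 * s := by
          by_cases hqb : |q| ≤ b
          · by_cases hq0 : q = 0
            · subst hq0; simpa using h2s
            · have h := H0 (-q) (by simpa using hq0) (by rwa [abs_neg])
              nlinarith
          · push_neg at hqb
            exfalso
            rcases le_or_gt 0 q with hq | hq
            · have hq' : b < q := by rwa [abs_of_nonneg hq] at hqb
              have h := H0 (-b) (by simpa using hb.ne') hnb
              nlinarith
            · have hq' : b < -q := by rwa [abs_of_neg hq] at hqb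
              have h := H0 b hb.ne' hbb
              nlinarith
        calc |q| = Real.sqrt (q^2) := (Real.sqrt_sq_eq_abs q).symm
          _ ≤ Real.sqrt (2*s) := Real.sqrt_le_sqrt hq2
      · -- case (4)
        right; right; right; left
        push_neg at hcmp
        have hble : b ≤ Real.sqrt (2*s) := by
          have := Real.sqrt_le_sqrt hcmp.le
          rwa [Real.sqrt_sq hb.le] at this
        refine ⟨rfl, hble, ?_⟩
        rcases le_or_gt 0 q with hq | hq
        · rw [abs_of_nonneg hq]
          by_cases hqb : q ≤ b
          · -- q ≤ b ≤ b/2 + s/b since b² ≤ 2s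
            refine le_trans hqb ?_
            refine le_of_mul_le_mul_right ?_ hb
            nlinarith
          · push_neg at hqb
            have h := H0 (-b) (by simpa using hb.ne') hnb
            refine le_of_mul_le_mul_right ?_ hb
            nlinarith
        · rw [abs_of_neg hq]
          by_cases hqb : -q ≤ b
          · refine le_trans hqb ?_
            refine le_of_mul_le_mul_right ?_ hb
            nlinarith
          · push_neg at hqb
            have h := H0 b hb.ne' hbb
            refine le_of_mul_le_mul_right ?_ hb
            nlinarith
    · -- u ≠ 0
      have hfu : q * u + u ^ 2 / 2 + s ≤ 0 := by
        have h := H 0 hb0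
        rw [hn0, hn1 u hu0] at h
        linarith
      have Hn : ∀ v : ℝ, v ≠ 0 → |v| ≤ b → q * u + u ^ 2 / 2 ≤ q * v + v ^ 2 / 2 := by
        intro v hv0 hvb
        have h := H v hvb
        rw [hn1 u hu0, hn1 v hv0] at h
        linarith
      by_cases hqb : |q| ≤ b
      · -- interior case : u = -q
        right; right; left
        have hq0 : q ≠ 0 := by
          intro h; subst h
          have hu2 : 0 < u ^ 2 := by positivity
          nlinarith
        have h := Hn (-q) (by simpa using hq0) (by rwa [abs_neg])
        have huq : u = -q := by nlinarith [sq_nonneg (u + q)]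
        refine ⟨huq, ?_, hqb⟩
        rw [huq] at hfu
        have hq2 : 2 * s ≤ q ^ 2 := by nlinarith
        calc Real.sqrt (2*s) ≤ Real.sqrt (q^2) := Real.sqrt_le_sqrt hq2
          _ = |q| := Real.sqrt_sq_eq_abs q
      · push_neg at hqb
        rcases le_or_gt 0 q with hq | hq
        · -- q > b : u = -b
          left
          have hq' : b < q := by rwa [abs_of_nonneg hq] at hqb
          have h := Hn (-b) (by simpa using hb.ne') hnb
          have hub : u = -b := by
            by_contra hne
            have h1 : 0 < u + b := lt_of_le_of_ne (by linarith) (by intro hc; exact hne (by linarith))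
            have h2 : 0 < 2*q + u - b := by linarith
            nlinarith [mul_pos h1 h2]
          refine ⟨hub, max_le hq'.le ?_⟩
          rw [hub] at hfu
          refine le_of_mul_le_mul_right ?_ hb
          nlinarith
        · -- q < -b : u = b
          right; left
          have hq' : b < -q := by rwa [abs_of_neg hq] at hqb
          have h := Hn b hb.ne' hbb
          have hub : u = b := by
            by_contra hne
            have h1 : 0 < b - u := lt_of_le_of_ne (by linarith) (by intro hc; exact hne (by linarith))
            have h2 : 0 < -2*q - u - b := by linarith
            nlinarith [mul_pos h1 h2]
          refine ⟨hub, ?_⟩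
          rw [hub] at hfu
          have h2 : b/2 + s/b ≤ -q := by
            refine le_of_mul_le_mul_right ?_ hb
            nlinarith
          linarith [max_le hq'.le h2]
  · rintro (⟨hu1, hq1⟩ | ⟨hu1, hq1⟩ | ⟨hu1, hq1, hq2⟩ | ⟨hu1, hq1, hq2⟩ | ⟨hu1, hq1, hq2⟩) v hv <;>
      obtain ⟨hvl, hvr⟩ := abs_le.mp hv
    · -- u = -b
      subst hu1
      obtain ⟨hqa, hqc⟩ := max_le_iff.mp hq1
      have hnb0 : (-b : ℝ) ≠ 0 := by simpa using hb.ne'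
      have hqc' : b^2/2 + s ≤ q * b := by
        have := mul_le_mul_of_nonneg_right hqc hb.le
        nlinarith
      by_cases hv0 : v = 0
      · subst hv0
        rw [hn1 _ hnb0, hn0]
        nlinarith
      · rw [hn1 _ hnb0, hn1 v hv0]
        nlinarith [mul_nonneg (by linarith : (0:ℝ) ≤ v + b) (by linarith : (0:ℝ) ≤ 2*q + v - b)]
    · -- u = b
      rw [hu1]
      have h' : max b (b / 2 + s / b) ≤ -q := by linarith
      obtain ⟨hqa, hqc⟩ := max_le_iff.mp h'
      have hqc' : b^2/2 + s ≤ -q * b := by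
        have := mul_le_mul_of_nonneg_right hqc hb.le
        nlinarith
      by_cases hv0 : v = 0
      · subst hv0
        rw [hn1 _ hb.ne', hn0]
        nlinarith
      · rw [hn1 _ hb.ne', hn1 v hv0]
        nlinarith [mul_nonneg (by linarith : (0:ℝ) ≤ b - v) (by linarith : (0:ℝ) ≤ -2*q - v - b)]
    · -- u = -q
      subst hu1
      have h2sq : 2 * s ≤ q ^ 2 := by
        nlinarith [mul_self_le_mul_self (Real.sqrt_nonneg (2*s)) hq1,
          Real.mul_self_sqrt h2s, abs_mul_abs_self q]
      by_cases hq0 : q = 0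
      · subst hq0
        have hs0 : s = 0 := by nlinarith
        by_cases hv0 : v = 0
        · subst hv0; simp
        · rw [neg_zero, hn0, hn1 v hv0]
          nlinarith [sq_nonneg v]
      · have hnq0 : (-q : ℝ) ≠ 0 := by simpa using hq0
        by_cases hv0 : v = 0
        · subst hv0
          rw [hn1 _ hnq0, hn0]
          nlinarith
        · rw [hn1 _ hnq0, hn1 v hv0]
          nlinarith [sq_nonneg (v + q)]
    · -- u = 0, b ≤ √(2s)
      subst hu1
      have hb2 : b ^ 2 ≤ 2 * s := by
        nlinarith [mul_self_le_mul_self hb.le hq1, Real.mul_self_sqrt h2s]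
      have hqb : |q| * b ≤ b ^ 2 / 2 + s := by
        have := mul_le_mul_of_nonneg_right hq2 hb.le
        nlinarith
      by_cases hv0 : v = 0
      · subst hv0; simp
      · rw [hn0, hn1 v hv0]
        have h4 : -(|q| * |v|) ≤ q * v := by
          rw [← abs_mul]; exact neg_abs_le (q*v)
        nlinarith [mul_nonneg (by linarith [abs_nonneg v, abs_le.mp hv] : (0:ℝ) ≤ b - |v|)
            (by linarith : (0:ℝ) ≤ 2*s - b^2),
          mul_nonneg (abs_nonneg v) (by nlinarith : (0:ℝ) ≤ s + b^2/2 - |q| * b),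
          mul_nonneg hb.le (sq_nonneg (|v| - b)), sq_abs v]
    · -- u = 0, √(2s) ≤ b, |q| ≤ √(2s)
      subst hu1
      have hq2' : q ^ 2 ≤ 2 * s := by
        nlinarith [mul_self_le_mul_self (abs_nonneg q) hq2, Real.mul_self_sqrt h2s,
          abs_mul_abs_self q]
      by_cases hv0 : v = 0
      · subst hv0; simp
      · rw [hn0, hn1 v hv0]
        nlinarith [sq_nonneg (v + q)]
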